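/- If an annotated π-term P is 𝒯-compatible, then depth(P) is at most the length of the longest strictly <-increasing chain in 𝒯 (in particular, depth(P) is bounded by the height of the finite forest 𝒯). -/

import Mathlib

open Relation

namespace PiCalc

abbrev Name := ℕ

/-- Types over a forest `T` of base types: `τ ::= t | t[τ]`. -/
inductive Ty (T : Type) : Type where
  | base : T → Ty T
  | chan : T → Ty T → Ty T

def Ty.baseOf {T : Type} : Ty T → T
  | .base t => t
  | .chan t _ => t

/-- Annotated π-calculus processes with guarded replication. -/
inductive Proc (T : Type) : Type where
  | nil  : Proc T
  | nu   : Name → Ty T → Proc T → Proc T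
  | par  : Proc T → Proc T → Proc T
  | sum  : Proc T → Proc T → Proc T
  | inp  : Name → Name → Proc T → Proc T
  | out  : Name → Name → Proc T → Proc T
  | tau  : Proc T → Proc T
  | repl : Proc T → Proc T

namespace Proc

variable {T : Type}

/-- free names -/
def fn : Proc T → Finset Name
  | .nil => ∅
  | .nu x _ P => P.fn.erase x
  | .par P Q => P.fn ∪ Q.fn
  | .sum P Q => P.fn ∪ Q.fn
  | .inp a x P => insert a (P.fn.erase x)
  | .out a b P => insert a (insert b P.fn)
  | .tau P => P.fn
  | .repl P => P.fn

/-- the list of all bound names (with multiplicity) -/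
def bnList : Proc T → List Name
  | .nil => []
  | .nu x _ P => x :: P.bnList
  | .par P Q => P.bnList ++ Q.bnList
  | .sum P Q => P.bnList ++ Q.bnList
  | .inp _ x P => x :: P.bnList
  | .out _ _ P => P.bnList
  | .tau P => P.bnList
  | .repl P => P.bnList

/-- all restriction binders occurring in the term, with their annotations -/
def bnNuList : Proc T → List (Name × Ty T)
  | .nil => []
  | .nu x τ P => (x, τ) :: P.bnNuList
  | .par P Q => P.bnNuList ++ Q.bnNuList
  | .sum P Q => P.bnNuList ++ Q.bnNuList
  | .inp _ _ P => P.bnNuList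
  | .out _ _ P => P.bnNuList
  | .tau P => P.bnNuList
  | .repl P => P.bnNuList

/-- substitute `b` for the free occurrences of `a` -/
def subst : Proc T → Name → Name → Proc T
  | .nil, _, _ => .nil
  | .nu x τ P, a, b => if x = a then .nu x τ P else .nu x τ (P.subst a b)
  | .par P Q, a, b => .par (P.subst a b) (Q.subst a b)
  | .sum P Q, a, b => .sum (P.subst a b) (Q.subst a b)
  | .inp c x P, a, b =>
      .inp (if c = a then b else c) x (if x = a then P else P.subst a b)
  | .out c d P, a, b =>
      .out (if c = a then b else c) (if d = a then b else d) (P.subst a b)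
  | .tau P, a, b => .tau (P.subst a b)
  | .repl P, a, b => .repl (P.subst a b)

/-- simultaneous substitution of free names -/
def msubst (σ : Name → Name) : Proc T → Proc T
  | .nil => .nil
  | .nu x τ P => .nu x τ (P.msubst (Function.update σ x x))
  | .par P Q => .par (P.msubst σ) (Q.msubst σ)
  | .sum P Q => .sum (P.msubst σ) (Q.msubst σ)
  | .inp a x P => .inp (σ a) x (P.msubst (Function.update σ x x))
  | .out a b P => .out (σ a) (σ b) (P.msubst σ)
  | .tau P => .tau (P.msubst σ)
  | .repl P => .repl (P.msubst σ)

/-- the active sequential subterms of a term -/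
def activeSeq : Proc T → List (Proc T)
  | .nil => []
  | .nu _ _ P => P.activeSeq
  | .par P Q => P.activeSeq ++ Q.activeSeq
  | P => [P]

/-- the derivatives: all sequential subterms, active or not -/
def der : Proc T → List (Proc T)
  | .nil => []
  | .nu _ _ P => P.der
  | .par P Q => P.der ++ Q.der
  | .sum M M' => .sum M M' :: (M.der ++ M'.der)
  | .inp a x P => .inp a x P :: P.der
  | .out a b P => .out a b P :: P.der
  | .tau P => .tau P :: P.der
  | .repl M => .repl M :: M.der

end Proc

/-- Structural congruence. -/
inductive Cong {T : Type} : Proc T → Proc T → Prop where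
  | refl (P : Proc T) : Cong P P
  | symm : Cong P Q → Cong Q P
  | trans : Cong P Q → Cong Q R → Cong P R
  | nu_congr (x : Name) (τ : Ty T) : Cong P Q → Cong (.nu x τ P) (.nu x τ Q)
  | par_congr : Cong P P' → Cong Q Q' → Cong (.par P Q) (.par P' Q')
  | sum_congr : Cong P P' → Cong Q Q' → Cong (.sum P Q) (.sum P' Q')
  | inp_congr (a x : Name) : Cong P Q → Cong (.inp a x P) (.inp a x Q)
  | out_congr (a b : Name) : Cong P Q → Cong (.out a b P) (.out a b Q)
  | tau_congr : Cong P Q → Cong (.tau P) (.tau Q)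
  | repl_congr : Cong P Q → Cong (.repl P) (.repl Q)
  | alpha_nu (x y : Name) (τ : Ty T) (P : Proc T) :
      y ∉ P.fn → y ∉ P.bnList → Cong (.nu x τ P) (.nu y τ (P.subst x y))
  | alpha_inp (a x y : Name) (P : Proc T) :
      y ∉ P.fn → y ∉ P.bnList → Cong (.inp a x P) (.inp a y (P.subst x y))
  | par_comm (P Q : Proc T) : Cong (.par P Q) (.par Q P)
  | par_assoc (P Q R : Proc T) : Cong (.par (.par P Q) R) (.par P (.par Q R))
  | par_nil (P : Proc T) : Cong (.par P .nil) P
  | sum_comm (P Q : Proc T) : Cong (.sum P Q) (.sum Q P)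
  | sum_assoc (P Q R : Proc T) : Cong (.sum (.sum P Q) R) (.sum P (.sum Q R))
  | sum_nil (P : Proc T) : Cong (.sum P .nil) P
  | nu_nil (x : Name) (τ : Ty T) : Cong (.nu x τ .nil) .nil
  | nu_swap (x y : Name) (τ σ : Ty T) (P : Proc T) :
      Cong (.nu x τ (.nu y σ P)) (.nu y σ (.nu x τ P))
  | repl_nil : Cong (.repl .nil) (.nil : Proc T)
  | repl_unfold (M : Proc T) : Cong (.repl M) (.par M (.repl M))
  | extrude (x : Name) (τ : Ty T) (P Q : Proc T) :
      x ∉ P.fn → Cong (.par P (.nu x τ Q)) (.nu x τ (.par P Q))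

/-- α-congruence: the congruence generated by α-conversion only. -/
inductive Alpha {T : Type} : Proc T → Proc T → Prop where
  | refl (P : Proc T) : Alpha P P
  | symm : Alpha P Q → Alpha Q P
  | trans : Alpha P Q → Alpha Q R → Alpha P R
  | nu_congr (x : Name) (τ : Ty T) : Alpha P Q → Alpha (.nu x τ P) (.nu x τ Q)
  | par_congr : Alpha P P' → Alpha Q Q' → Alpha (.par P Q) (.par P' Q')
  | sum_congr : Alpha P P' → Alpha Q Q' → Alpha (.sum P Q) (.sum P' Q')
  | inp_congr (a x : Name) : Alpha P Q → Alpha (.inp a x P) (.inp a x Q)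
  | out_congr (a b : Name) : Alpha P Q → Alpha (.out a b P) (.out a b Q)
  | tau_congr : Alpha P Q → Alpha (.tau P) (.tau Q)
  | repl_congr : Alpha P Q → Alpha (.repl P) (.repl Q)
  | alpha_nu (x y : Name) (τ : Ty T) (P : Proc T) :
      y ∉ P.fn → y ∉ P.bnList → Alpha (.nu x τ P) (.nu y τ (P.subst x y))
  | alpha_inp (a x y : Name) (P : Proc T) :
      y ∉ P.fn → y ∉ P.bnList → Alpha (.inp a x P) (.inp a y (P.subst x y))

mutual
  /-- choices in normal form: sums of prefixed normal forms -/
  inductive NFChoice {T : Type} : Proc T → Prop where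
    | inp : NF P → NFChoice (.inp a x P)
    | out : NF P → NFChoice (.out a b P)
    | tau : NF P → NFChoice (.tau P)
    | sum : NFChoice M → NFChoice M' → NFChoice (.sum M M')

  /-- parallel compositions of normal-form sequential terms -/
  inductive NFPar {T : Type} : Proc T → Prop where
    | choice : NFChoice A → NFPar A
    | repl : NFChoice A → NFPar (.repl A)
    | par : NFPar P → NFPar Q → NFPar (.par P Q)

  /-- normal forms: ν x₁ … ν xₙ . (A₁ ‖ … ‖ A_m) -/
  inductive NF {T : Type} : Proc T → Prop where
    | nil : NF (.nil : Proc T)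
    | par : NFPar P → NF P
    | nu (x : Name) (τ : Ty T) : NF P → P ≠ .nil → NF (.nu x τ P)
end

/-- name uniqueness: every name bound at most once, free and bound names disjoint -/
def NameUniq {T : Type} (P : Proc T) : Prop :=
  P.bnList.Nodup ∧ ∀ x ∈ P.bnList, x ∉ P.fn

/-- normal forms are assumed (wlog) to satisfy name uniqueness -/
def NormalForm {T : Type} (P : Proc T) : Prop := NF P ∧ NameUniq P

/-- ν-prefixing by a list of annotated restrictions -/
def nuList {T : Type} (X : List (Name × Ty T)) (P : Proc T) : Proc T :=
  X.foldr (fun xτ Q => .nu xτ.1 xτ.2 Q) P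

/-- parallel composition of a list of terms (`0` if empty) -/
def parList {T : Type} : List (Proc T) → Proc T
  | [] => .nil
  | [A] => A
  | A :: As => .par A (parList As)

/-- `A` occurs as a summand of the choice `M` -/
inductive Summand {T : Type} : Proc T → Proc T → Prop where
  | refl (A : Proc T) : Summand A A
  | left : Summand A M → Summand A (.sum M M')
  | right : Summand A M' → Summand A (.sum M M')

/-- Reduction semantics of the π-calculus (Definition 2.1). -/
inductive Reduces {T : Type} : Proc T → Proc T → Prop where
  | comm (P Q S R : Proc T) (Cs : List (Proc T)) (W Ys Yr : List (Name × Ty T))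
      (a b x : Name) (S' R' : Proc T) :
      Cong P (nuList W (parList (S :: R :: Cs))) →
      NormalForm (nuList W (parList (S :: R :: Cs))) →
      Summand (.out a b (nuList Ys S')) S →
      Summand (.inp a x (nuList Yr R')) R →
      Cong Q (nuList (W ++ Ys ++ Yr) (parList (S' :: R'.subst x b :: Cs))) →
      Reduces P Q
  | tauStep (P Q : Proc T) (Cs : List (Proc T)) (W Y : List (Name × Ty T)) (P' : Proc T) :
      Cong P (nuList W (parList (.tau (nuList Y P') :: Cs))) →
      NormalForm (nuList W (parList (.tau (nuList Y P') :: Cs))) →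
      Cong Q (nuList (W ++ Y) (parList (P' :: Cs))) →
      Reduces P Q

/-- reachable terms -/
def Reach {T : Type} (P : Proc T) : Set (Proc T) :=
  {Q | Relation.ReflTransGen Reduces P Q}

/-- nesting of restrictions -/
def nestNu {T : Type} : Proc T → ℕ
  | .nu _ _ P => nestNu P + 1
  | .par P Q => max (nestNu P) (nestNu Q)
  | _ => 0

/-- depth: the minimal nesting of restrictions in the congruence class -/
noncomputable def depth {T : Type} (P : Proc T) : ℕ :=
  sInf {n | ∃ Q, Cong Q P ∧ nestNu Q = n}

def DepthBounded {T : Type} (P : Proc T) : Prop :=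
  ∃ k, ∀ Q ∈ Reach P, depth Q ≤ k

/-! ## Labelled forests -/

inductive LTree (L : Type) : Type where
  | node : L → List (LTree L) → LTree L

abbrev LForest (L : Type) := List (LTree L)

/-- isomorphism of labelled trees -/
inductive TreeEquiv {L : Type} : LTree L → LTree L → Prop where
  | node (l : L) (cs cs' : List (LTree L)) (σ : Fin cs.length ≃ Fin cs'.length)
      (h : ∀ i, TreeEquiv (cs.get i) (cs'.get (σ i))) :
      TreeEquiv (.node l cs) (.node l cs')

/-- isomorphism of labelled forests -/
def ForestEquiv {L : Type} (φ φ' : LForest L) : Prop :=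
  ∃ σ : Fin φ.length ≃ Fin φ'.length, ∀ i, TreeEquiv (φ.get i) (φ'.get (σ i))

/-- paths starting at the root of a tree, as label sequences -/
inductive RootPath {L : Type} : LTree L → List L → Prop where
  | single (l : L) (cs : List (LTree L)) : RootPath (.node l cs) [l]
  | cons {t : LTree L} {p : List L} (l : L) (cs : List (LTree L)) :
      t ∈ cs → RootPath t p → RootPath (.node l cs) (l :: p)

/-- `Subtree s t`: `s` is a subtree of `t` -/
inductive Subtree {L : Type} : LTree L → LTree L → Prop where
  | refl (t : LTree L) : Subtree t t
  | child {s t : LTree L} (l : L) (cs : List (LTree L)) :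
      t ∈ cs → Subtree s t → Subtree s (.node l cs)

def InForest {L : Type} (φ : LForest L) (s : LTree L) : Prop :=
  ∃ t ∈ φ, Subtree s t

/-- traces of (arbitrary) paths of the forest -/
def IsTrace {L : Type} (φ : LForest L) (p : List L) : Prop :=
  ∃ s, InForest φ s ∧ RootPath s p

/-- traces of paths starting at a root of the forest -/
def IsRootTrace {L : Type} (φ : LForest L) (p : List L) : Prop :=
  ∃ t ∈ φ, RootPath t p

/-- labels in the forest representation of annotated terms: `(x, base τ)` or a sequential term -/
abbrev FLabel (T : Type) := (Name × T) ⊕ Proc T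

/-- the forest of an annotated term -/
def forestOf {T : Type} : Proc T → LForest (FLabel T)
  | .nil => []
  | .nu x τ P => [.node (.inl (x, τ.baseOf)) (forestOf P)]
  | .par P Q => forestOf P ++ forestOf Q
  | P => [.node (.inr P) []]

/-- the forest representation of the congruence class of `P` (up to isomorphism) -/
def Fsem {T : Type} (P : Proc T) : Set (LForest (FLabel T)) :=
  {φ | ∃ Q, Cong Q P ∧ ForestEquiv φ (forestOf Q)}

/-- 𝒯-compatibility of a labelled forest w.r.t. the strict order `lt` on base types -/
def TCompatForest {T : Type} (lt : T → T → Prop) (φ : LForest (FLabel T)) : Prop :=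
  ∀ (xs : List (Name × T)) (A : Proc T),
    IsTrace φ (xs.map Sum.inl ++ [Sum.inr A]) →
    (xs.map Prod.snd).Chain' lt

/-- a term is 𝒯-compatible if some forest in `Fsem P` is -/
def TCompat {T : Type} (lt : T → T → Prop) (P : Proc T) : Prop :=
  ∃ φ ∈ Fsem P, TCompatForest lt φ

inductive Subterm {T : Type} : Proc T → Proc T → Prop where
  | refl (P : Proc T) : Subterm P P
  | nu (x : Name) (τ : Ty T) : Subterm S P → Subterm S (.nu x τ P)
  | par_left : Subterm S P → Subterm S (.par P Q)
  | par_right : Subterm S Q → Subterm S (.par P Q)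
  | sum_left : Subterm S P → Subterm S (.sum P Q)
  | sum_right : Subterm S Q → Subterm S (.sum P Q)
  | inp (a x : Name) : Subterm S P → Subterm S (.inp a x P)
  | out (a b : Name) : Subterm S P → Subterm S (.out a b P)
  | tau : Subterm S P → Subterm S (.tau P)
  | repl : Subterm S P → Subterm S (.repl P)

/-- a term is 𝒯-shaped if all its subterms are 𝒯-compatible -/
def TShaped {T : Type} (lt : T → T → Prop) (P : Proc T) : Prop :=
  ∀ S, Subterm S P → TCompat lt S

/-! ## The tied-to relation -/

def fnAt {T : Type} (As : List (Proc T)) (i : ℕ) : Finset Name := (As.getD i .nil).fn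

def namesOf {T : Type} (X : List (Name × Ty T)) : List Name := X.map Prod.fst

/-- `A_i` is linked to `A_j` in `νX.∏ As` -/
def Linked {T : Type} (X : List (Name × Ty T)) (As : List (Proc T)) (i j : ℕ) : Prop :=
  i < As.length ∧ j < As.length ∧
  ∃ y, y ∈ fnAt As i ∧ y ∈ fnAt As j ∧ y ∈ namesOf X

/-- `A_i` is tied to `A_j` in `νX.∏ As` -/
def Tied {T : Type} (X : List (Name × Ty T)) (As : List (Proc T)) : ℕ → ℕ → Prop :=
  Relation.TransGen (Linked X As)

/-- the name `y` is tied to `A_i` in `νX.∏ As` -/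
def NameTied {T : Type} (X : List (Name × Ty T)) (As : List (Proc T))
    (y : Name) (i : ℕ) : Prop :=
  ∃ j, y ∈ fnAt As j ∧ Tied X As j i

/-! ## The forest of base types and the type system -/

/-- `step` is the parent relation of a forest -/
def IsForestRel {T : Type} (step : T → T → Prop) : Prop :=
  (∀ a b c, step a c → step b c → a = b) ∧ ∀ t, ¬ Relation.TransGen step t t

/-- the strict order `<` on base types -/
def blt {T : Type} (step : T → T → Prop) : T → T → Prop := Relation.TransGen step

/-- the order `≤` on base types -/
def ble {T : Type} (step : T → T → Prop) : T → T → Prop := Relation.ReflTransGen step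

def Env (T : Type) := Name → Option (Ty T)

def extendEnv {T : Type} (Γ : Env T) (X : List (Name × Ty T)) : Env T :=
  fun y => match X.find? (fun p => p.1 == y) with
    | some p => some p.2
    | none => Γ y

/-- The type system of Figure 4. -/
inductive Types {T : Type} (step : T → T → Prop) : Env T → Proc T → Prop where
  | par (Γ : Env T) (X : List (Name × Ty T)) (As : List (Proc T)) :
      (∀ A ∈ As, Types step (extendEnv Γ X) A) →
      (∀ i, i < As.length → ∀ xτ ∈ X, NameTied X As xτ.1 i →
        ∀ y ∈ fnAt As i, ∀ τy, Γ y = some τy →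
          blt step τy.baseOf xτ.2.baseOf) →
      Types step Γ (nuList X (parList As))
  | sum (Γ : Env T) : Types step Γ M → Types step Γ M' → Types step Γ (.sum M M')
  | repl (Γ : Env T) : Types step Γ A → Types step Γ (.repl A)
  | tau (Γ : Env T) : Types step Γ A → Types step Γ (.tau A)
  | out (Γ : Env T) (a b : Name) (ta : T) (τb : Ty T) (Q : Proc T) :
      Γ a = some (.chan ta τb) → Γ b = some τb → Types step Γ Q →
      Types step Γ (.out a b Q)
  | inp (Γ : Env T) (a x : Name) (ta : T) (τx : Ty T)
      (X : List (Name × Ty T)) (As : List (Proc T)) :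
      Γ a = some (.chan ta τx) →
      Types step (extendEnv Γ [(x, τx)]) (nuList X (parList As)) →
      (ble step τx.baseOf ta ∨
        (∀ i, i < As.length → NameTied X As x i →
          ∀ y ∈ fnAt As i, y ≠ a → ∀ τy, Γ y = some τy →
            blt step τy.baseOf ta)) →
      Types step Γ (.inp a x (nuList X (parList As)))

/-- `Γ` is `P`-safe -/
def PSafe {T : Type} (step : T → T → Prop) (Γ : Env T) (P : Proc T) : Prop :=
  ∀ x ∈ P.fn, ∀ τx, Γ x = some τx →
    ∀ yτ ∈ P.bnNuList, blt step τx.baseOf yτ.2.baseOf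

/-- typably hierarchical terms -/
def TypablyHierarchical {T : Type} (step : T → T → Prop) (P : Proc T) : Prop :=
  ∃ N, NormalForm N ∧ Cong N P ∧ TShaped (blt step) N ∧
    ∃ Γ : Env T, PSafe step Γ N ∧ Types step Γ N


/-! ## The function Φ of Figure 2 -/

open scoped Classical in
/-- the assignments in `X` whose base type is minimal w.r.t. `<` -/
noncomputable def minT {T : Type} (step : T → T → Prop)
    (X : List (Name × Ty T)) : List (Name × Ty T) :=
  X.filter (fun xτ => decide (∀ yτ ∈ X, ¬ blt step yτ.2.baseOf xτ.2.baseOf))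

open scoped Classical in
/-- fuelled version of the function Φ of Figure 2; with `fuel ≥ X.length`
(and 𝒯 a forest) the fuel never runs out -/
noncomputable def PhiAux {T : Type} (step : T → T → Prop) :
    ℕ → List (Name × Ty T) → List (Proc T) → LForest (FLabel T)
  | 0, _, As => As.map (fun A => .node (.inr A) [])
  | fuel+1, X, As =>
    if X.isEmpty then As.map (fun A => .node (.inr A) []) else
      let m := minT step X
      let Ix : (Name × Ty T) → List ℕ := fun xτ =>
        (List.range As.length).filter (fun i => decide (NameTied X As xτ.1 i))
      let Yx : (Name × Ty T) → List (Name × Ty T) := fun xτ =>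
        X.filter (fun yτ => decide ((∃ i ∈ Ix xτ, yτ.1 ∈ fnAt As i) ∧ yτ ∉ m))
      let R : List ℕ :=
        (List.range As.length).filter
          (fun i => decide (∀ xτ ∈ m, ¬ NameTied X As xτ.1 i))
      let Z : List (Name × Ty T) :=
        X.filter (fun yτ => decide (yτ ∉ m ∧ ∀ xτ ∈ m, yτ ∉ Yx xτ))
      (m.map (fun xτ =>
        LTree.node (.inl (xτ.1, xτ.2.baseOf))
          (PhiAux step fuel (Yx xτ) ((Ix xτ).map (fun i => As.getD i .nil)))))
      ++ PhiAux step fuel Z (R.map (fun i => As.getD i .nil))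

/-- the function `Φ_𝒯` of Figure 2, applied to `νX.∏ As` -/
noncomputable def Phi {T : Type} (step : T → T → Prop)
    (X : List (Name × Ty T)) (As : List (Proc T)) : LForest (FLabel T) :=
  PhiAux step X.length X As

/-! ## Miscellaneous helpers -/

/-- the labels of a tree -/
def treeLabels {L : Type} : LTree L → List L
  | .node l cs => l :: (cs.attach.map (fun t => treeLabels t.1)).flatten
decreasing_by
  have := List.sizeOf_lt_of_mem t.2
  simp only [LTree.node.sizeOf_spec]
  omega

/-- the labels of a forest -/
def forestLabels {L : Type} (φ : LForest L) : List L := (φ.map treeLabels).flatten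

/-- forest labels keeping the full type annotation on names -/
abbrev FLabelA (T : Type) := (Name × Ty T) ⊕ Proc T

/-- the forest of a term, keeping full annotations on name labels -/
def forestOfA {T : Type} : Proc T → LForest (FLabelA T)
  | .nil => []
  | .nu x τ P => [.node (.inl (x, τ)) (forestOfA P)]
  | .par P Q => forestOfA P ++ forestOfA Q
  | P => [.node (.inr P) []]

/-- union of two (disjoint) environments -/
def envUnion {T : Type} (Γ Γ' : Env T) : Env T :=
  fun y => match Γ y with
    | some τ => some τ
    | none => Γ' y

/-- `Deriv_P` relative to the choice `χ` of one name per base type -/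
def DerivSet {T : Type} (χ : T → Name) (P : Proc T) : Set (Proc T) :=
  {Q' | ∃ Q ∈ P.der, ∃ σ : Name → Name,
    (∀ y ∈ Q.fn, σ y ∈ Set.range χ ∪ (P.fn : Set Name)) ∧ Q' = Q.msubst σ}

/-! ## Nested data class memory automata and their π-calculus encoding -/

namespace NDCMA

/-- a transition of a nested data class memory automaton with states `Fin m`:
`(src, tested, dst, written)` -/
structure Trans (m : ℕ) where
  src : Fin m
  tested : List (Option (Fin m))
  dst : Fin m
  written : List (Fin m)

/-- Class memory functions over the canonical nested dataset whose level-`i`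
data values are the lists of naturals of length `i`, with `pred` taking
prefixes (`⊥` is `none`). -/
abbrev CMF (m : ℕ) := List ℕ → Option (Fin m)

/-- one step of the automaton -/
def AStep {m : ℕ} (δ : List (Trans m)) :
    (Fin m × CMF m) → (Fin m × CMF m) → Prop :=
  fun c c' => ∃ tr ∈ δ, ∃ d : List ℕ,
    d.length = tr.tested.length ∧
    c.1 = tr.src ∧ c'.1 = tr.dst ∧
    (∀ j (hj : j < tr.tested.length), c.2 (d.take (j+1)) = tr.tested.get ⟨j, hj⟩) ∧
    (∀ j (hj : j < tr.written.length),
      c'.2 (d.take (j+1)) = some (tr.written.get ⟨j, hj⟩)) ∧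
    (∀ l : List ℕ, (∀ j < tr.tested.length, l ≠ d.take (j+1)) → c'.2 l = c.2 l)

/-- the type of the payload-free channels -/
def TyU : Ty Unit := .chan () (.base ())

/-- the channel `c^i_q` -/
def ch {m : ℕ} (i : ℕ) (q : Fin m) : Name := 2 + Nat.pair i q.val

/-- payload-free input -/
def recv (c : Name) (P : Proc Unit) : Proc Unit := .inp c 0 P

/-- payload-free output (with nil continuation) -/
def send (c : Name) : Proc Unit := .out c 1 .nil

/-- the restrictions `ν𝒞^i` -/
def Cset (m i : ℕ) : List (Name × Ty Unit) :=
  (List.finRange m).map (fun q => (ch i q, TyU))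

/-- the transitions in `θ_j`: those testing exactly `j` non-fresh data values -/
def theta {m : ℕ} (δ : List (Trans m)) (j : ℕ) : List (Trans m) :=
  δ.filter (fun tr => (tr.tested.takeWhile Option.isSome).length == j)

/-- the term `A_tr`, parametric in the encoding `Pθ` of the lower levels -/
def Atr {m : ℕ} (Pθ : ℕ → Proc Unit) (tr : Trans m) : Proc Unit :=
  let j := (tr.tested.takeWhile Option.isSome).length
  let i := tr.tested.length
  let testedQs : List (Fin m) := tr.tested.reduceOption
  let inputs : List Name :=
    ch 0 tr.src :: List.zipWith (fun k q => ch k q) (List.range' 1 j) testedQs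
  let restr : List (Name × Ty Unit) :=
    ((List.range' (j+1) (i - j)).map (fun k => Cset m k)).flatten
  let outs : List (Proc Unit) :=
    send (ch 0 tr.dst) ::
      List.zipWith (fun k q => send (ch k q)) (List.range' 1 i) tr.written
  let conts : List (Proc Unit) := (List.range' (j+1) (i - j)).map Pθ
  inputs.foldr (fun c P => recv c P) (nuList restr (parList (outs ++ conts)))

/-- the terms `P_{θ_j}` (with fuel; `fuel = ℓ+1` suffices for level-`ℓ` automata) -/
def Ptheta {m : ℕ} (δ : List (Trans m)) : ℕ → ℕ → Proc Unit
  | 0, _ => .nil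
  | fuel+1, j =>
      parList ((theta δ j).map (fun tr => .repl (Atr (fun k => Ptheta δ fuel k) tr)))

/-- the π-term encoding `P⟦𝒜⟧` of a level-`ℓ` NDCMA -/
def encode {m : ℕ} (ℓ : ℕ) (δ : List (Trans m)) (q0 : Fin m) : Proc Unit :=
  nuList (Cset m 0) (parList [Ptheta δ (ℓ+1) 0, send (ch 0 q0)])

/-- terms of the form `ν𝒞⁰.(c̄ ‖ P')` with `c ∈ 𝒞⁰` -/
def Zform (m : ℕ) (P : Proc Unit) : Prop :=
  ∃ (q : Fin m) (P' : Proc Unit),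
    Cong P (nuList (Cset m 0) (.par (send (ch 0 q)) P'))

/-- the derived transition relation `⟹` -/
def DStep (m : ℕ) (P Q : Proc Unit) : Prop :=
  Zform m P ∧ Zform m Q ∧
  ∃ (n : ℕ) (R : ℕ → Proc Unit), R 0 = P ∧ R n = Q ∧ 1 ≤ n ∧
    (∀ k < n, Reduces (R k) (R (k+1))) ∧
    (∀ k, 0 < k → k < n → ¬ Zform m (R k))

end NDCMA

/-! Pick `Q ≡ P` whose forest is isomorphic to a 𝒯-compatible one. Deleting the restrictions
of `Q` whose scope contains no sequential term keeps it in its congruence class and only removes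
branches of its forest, so the result is still 𝒯-compatible. Now every restriction lies on a
branch ending in a sequential term, so the ν-nesting is at most the length of such a branch,
and the base types along that branch form a `<`-chain. -/

namespace LTree

variable {L : Type}

-- `f` need not be injective: only the label paths of the trees matter here.
inductive Embed : LTree L → LTree L → Prop where
  | node (l : L) (cs cs' : List (LTree L)) (f : LTree L → LTree L) :
      (∀ c ∈ cs, f c ∈ cs') → (∀ c ∈ cs, Embed c (f c)) → Embed (.node l cs) (.node l cs')

theorem Embed.of_forall_mem {l : L} {cs cs' : List (LTree L)}
    (h : ∀ c ∈ cs, ∃ c' ∈ cs', Embed c c') : Embed (.node l cs) (.node l cs') := by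
  choose! f hf hemb using h
  exact .node l cs cs' f hf hemb

theorem Embed.refl : ∀ t : LTree L, Embed t t
  | .node l cs => .of_forall_mem fun c hc => ⟨c, hc, Embed.refl c⟩
decreasing_by
  have := List.sizeOf_lt_of_mem hc
  simp only [LTree.node.sizeOf_spec]
  omega

end LTree

section Forests

variable {L : Type}

theorem TreeEquiv.symm {t t' : LTree L} (h : TreeEquiv t t') : TreeEquiv t' t := by
  induction h with
  | node l cs cs' σ _ ih =>
    refine .node l cs' cs σ.symm fun i => ?_
    simpa using ih (σ.symm i)

theorem TreeEquiv.embed {t t' : LTree L} (h : TreeEquiv t t') : t.Embed t' := by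
  induction h with
  | node l cs cs' σ _ ih =>
    refine .of_forall_mem fun c hc => ?_
    obtain ⟨i, rfl⟩ := List.get_of_mem hc
    exact ⟨_, List.get_mem _ _, ih i⟩

theorem RootPath.of_embed {t t' : LTree L} {p : List L} (hp : RootPath t p)
    (he : t.Embed t') : RootPath t' p := by
  induction hp generalizing t' with
  | single l cs => cases he; exact .single l _
  | cons l cs hmem _ ih =>
    cases he with
    | node _ _ cs' f hf hemb => exact .cons l cs' (hf _ hmem) (ih (hemb _ hmem))

theorem Subtree.exists_of_embed {s t t' : LTree L} (hs : Subtree s t) (he : t.Embed t') :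
    ∃ s', Subtree s' t' ∧ s.Embed s' := by
  induction hs generalizing t' with
  | refl => exact ⟨t', .refl t', he⟩
  | child l cs hmem _ ih =>
    cases he with
    | node _ _ cs' f hf hemb =>
      obtain ⟨s', hs', hemb'⟩ := ih (hemb _ hmem)
      exact ⟨s', .child l cs' (hf _ hmem) hs', hemb'⟩

def ForestEmbed (φ ψ : LForest L) : Prop :=
  ∀ t ∈ φ, ∃ t' ∈ ψ, t.Embed t'

theorem ForestEmbed.append {φ φ' ψ ψ' : LForest L} (h : ForestEmbed φ ψ)
    (h' : ForestEmbed φ' ψ') : ForestEmbed (φ ++ φ') (ψ ++ ψ') := by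
  intro t ht
  rcases List.mem_append.1 ht with ht | ht
  · obtain ⟨t', ht', he⟩ := h t ht
    exact ⟨t', List.mem_append_left _ ht', he⟩
  · obtain ⟨t', ht', he⟩ := h' t ht
    exact ⟨t', List.mem_append_right _ ht', he⟩

theorem ForestEquiv.forestEmbed_symm {φ ψ : LForest L} (h : ForestEquiv φ ψ) :
    ForestEmbed ψ φ := by
  obtain ⟨σ, hσ⟩ := h
  intro t ht
  obtain ⟨j, rfl⟩ := List.get_of_mem ht
  refine ⟨φ.get (σ.symm j), List.get_mem _ _, ?_⟩
  simpa using (hσ (σ.symm j)).symm.embed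

theorem IsTrace.of_forestEmbed {φ ψ : LForest L} {p : List L} (hp : IsTrace φ p)
    (h : ForestEmbed φ ψ) : IsTrace ψ p := by
  obtain ⟨s, ⟨t, ht, hst⟩, hs⟩ := hp
  obtain ⟨t', ht', htt'⟩ := h t ht
  obtain ⟨s', hs't', hss'⟩ := hst.exists_of_embed htt'
  exact ⟨s', ⟨t', ht', hs't'⟩, hs.of_embed hss'⟩

theorem TCompatForest.of_forestEmbed {T : Type} {lt : T → T → Prop}
    {φ ψ : LForest (FLabel T)} (hψ : TCompatForest lt ψ) (h : ForestEmbed φ ψ) :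
    TCompatForest lt φ :=
  fun xs A hp => hψ xs A (hp.of_forestEmbed h)

end Forests

namespace Proc

variable {T : Type}

def prune : Proc T → Proc T
  | .nu x τ P => if (forestOf (prune P)).isEmpty then .nil else .nu x τ (prune P)
  | .par P Q => .par (prune P) (prune Q)
  | P => P

theorem cong_nil_of_forestOf_eq_nil : ∀ {P : Proc T}, forestOf P = [] → Cong P .nil
  | .nil, _ => .refl _
  | .par P Q, h => by
    simp only [forestOf, List.append_eq_nil_iff] at h
    exact .trans (.par_congr (cong_nil_of_forestOf_eq_nil h.1)
      (cong_nil_of_forestOf_eq_nil h.2)) (.par_nil _)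
  | .nu _ _ _, h | .sum _ _, h | .inp _ _ _, h | .out _ _ _, h | .tau _, h | .repl _, h => by
    simp [forestOf] at h

theorem prune_cong (P : Proc T) : Cong P.prune P := by
  induction P with
  | nu x τ P ih =>
    by_cases h : (forestOf P.prune).isEmpty
    · rw [prune, if_pos h]
      exact .symm (.trans (.nu_congr x τ (.trans (.symm ih)
        (cong_nil_of_forestOf_eq_nil (List.isEmpty_iff.1 h)))) (.nu_nil x τ))
    · rw [prune, if_neg h]
      exact .nu_congr x τ ih
  | par P Q ihP ihQ => exact .par_congr ihP ihQ
  | _ => exact .refl _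

theorem forestEmbed_prune (P : Proc T) : ForestEmbed (forestOf P.prune) (forestOf P) := by
  induction P with
  | nu x τ P ih =>
    by_cases h : (forestOf P.prune).isEmpty
    · simp [prune, h, forestOf, ForestEmbed]
    · rw [prune, if_neg h]
      simp only [forestOf, ForestEmbed, List.mem_singleton, forall_eq, exists_eq_left]
      exact .of_forall_mem ih
  | par P Q ihP ihQ => exact ihP.append ihQ
  | _ => exact fun t ht => ⟨t, ht, .refl t⟩

theorem exists_rootPath_of_mem_forestOf_prune (P : Proc T) :
    ∀ t ∈ forestOf P.prune, ∃ (xs : List (Name × T)) (A : Proc T),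
      RootPath t (xs.map Sum.inl ++ [Sum.inr A]) := by
  induction P with
  | nu x τ P ih =>
    by_cases h : (forestOf P.prune).isEmpty
    · simp [prune, h, forestOf]
    · rw [prune, if_neg h]
      simp only [forestOf, List.mem_singleton, forall_eq]
      obtain ⟨c, hc⟩ := List.exists_mem_of_ne_nil _ (by simpa using h)
      obtain ⟨xs, A, hp⟩ := ih c hc
      exact ⟨(x, τ.baseOf) :: xs, A, .cons _ _ hc hp⟩
  | par P Q ihP ihQ =>
    simp only [prune, forestOf, List.mem_append]
    rintro t (ht | ht)
    exacts [ihP t ht, ihQ t ht]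
  | nil => simp [prune, forestOf]
  | _ =>
    simp only [prune, forestOf, List.mem_singleton, forall_eq]
    exact ⟨[], _, .single _ _⟩

theorem nestNu_prune_le (P : Proc T) {k : ℕ}
    (h : ∀ (xs : List (Name × T)) (A : Proc T),
      IsRootTrace (forestOf P.prune) (xs.map Sum.inl ++ [Sum.inr A]) → xs.length ≤ k) :
    nestNu P.prune ≤ k := by
  induction P generalizing k with
  | nu x τ P ih =>
    by_cases hP : (forestOf P.prune).isEmpty
    · simp [prune, hP, nestNu]
    rw [prune, if_neg hP] at h ⊢
    have extend : ∀ (xs : List (Name × T)) (A : Proc T),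
        IsRootTrace (forestOf P.prune) (xs.map Sum.inl ++ [Sum.inr A]) → xs.length + 1 ≤ k :=
      fun xs A ⟨t, ht, hp⟩ =>
      h ((x, τ.baseOf) :: xs) A ⟨_, List.mem_singleton_self _, .cons _ _ ht hp⟩
    obtain ⟨t, ht⟩ := List.exists_mem_of_ne_nil _ (by simpa using hP)
    obtain ⟨xs, A, hp⟩ := exists_rootPath_of_mem_forestOf_prune P t ht
    have hk : 1 ≤ k := by have := extend xs A ⟨t, ht, hp⟩; omega
    have hbody : nestNu P.prune ≤ k - 1 :=
      ih fun xs A hp => by have := extend xs A hp; omega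
    simp only [nestNu]
    omega
  | par P Q ihP ihQ =>
    exact max_le (ihP fun xs A ⟨t, ht, hp⟩ => h xs A ⟨t, List.mem_append_left _ ht, hp⟩)
      (ihQ fun xs A ⟨t, ht, hp⟩ => h xs A ⟨t, List.mem_append_right _ ht, hp⟩)
  | _ => exact Nat.zero_le _

end Proc

theorem depth_le_nestNu {T : Type} {P Q : Proc T} (h : Cong Q P) : depth P ≤ nestNu Q :=
  Nat.sInf_le ⟨Q, h, rfl⟩

/-- the depth of a 𝒯-compatible term is bounded by the length
of the longest strictly `<`-increasing chain in 𝒯. -/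
theorem tcompat_depth_le_chain {T : Type} [Fintype T] (step : T → T → Prop)
    (hT : IsForestRel step) (P : Proc T)
    (h : TCompat (blt step) P) (n : ℕ)
    (hn : ∀ l : List T, l.Chain' (blt step) → l.length ≤ n) :
    depth P ≤ n := by
  obtain ⟨φ, ⟨Q, hQP, hφ⟩, hcompat⟩ := h
  have hQ : TCompatForest (blt step) (forestOf Q.prune) :=
    (hcompat.of_forestEmbed hφ.forestEmbed_symm).of_forestEmbed Q.forestEmbed_prune
  calc depth P ≤ nestNu Q.prune := depth_le_nestNu (Q.prune_cong.trans hQP)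
    _ ≤ n := Q.nestNu_prune_le fun xs A ⟨t, ht, hp⟩ => by
      simpa using hn _ (hQ xs A ⟨t, ⟨t, ht, .refl t⟩, hp⟩)

end PiCalc
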